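/- arXiv:2501.03710 — 2 statements merged into one kernel-verified Lean document; each statement's English description precedes it below -/
import Mathlib

section
/- Let G be a finite simple graph without isolated vertices and let E₁, E₂ be a partition of E(G) such that the spanning subgraphs G[E₁] = (V(G),E₁) and G[E₂] = (V(G),E₂) have no isolated vertices. Then for every linear order π* of the vertices of the bipartite double cover G* (note that G*, G[E₁]* and G[E₂]* all have the same vertex set), at least one of G[E₁]*, G[E₂]* has an induced matching M neatly crossing π* with 4·|M| ≥ lsimw(G). -/
/-! ## Common definitions -/

/-- A (partial) assignment over variable type `V`. -/
abbrev Asg (V : Type*) := V → Option Bool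

/-- The domain (set of variables) of an assignment. -/
def Asg.dom {V : Type*} (g : Asg V) : Set V := {x | g x ≠ none}

/-- Union of two assignments (the left one takes precedence where both are defined). -/
def Asg.union {V : Type*} (g h : Asg V) : Asg V := fun x => (g x).orElse (fun _ => h x)

/-- A set of assignments is uniform with common domain `S`. -/
def UniformOn {V : Type*} (H : Set (Asg V)) (S : Set V) : Prop := ∀ g ∈ H, g.dom = S

/-- The product `H₁ × H₂` of two sets of assignments. -/
def AsgProd {V : Type*} (H₁ H₂ : Set (Asg V)) : Set (Asg V) := Set.image2 Asg.union H₁ H₂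

/-- `H`, a uniform set of assignments with variable set `W`, is a rectangle that
breaks `Y ⊆ W`: it has nonempty uniform witnesses whose nonempty variable sets
partition `W` and both meet `Y`. -/
def BreaksOn {V : Type*} (H : Set (Asg V)) (W Y : Set V) : Prop :=
  ∃ (H₁ H₂ : Set (Asg V)) (S₁ S₂ : Set V),
    H₁.Nonempty ∧ H₂.Nonempty ∧ UniformOn H₁ S₁ ∧ UniformOn H₂ S₂ ∧
    S₁.Nonempty ∧ S₂.Nonempty ∧ S₁ ∩ S₂ = ∅ ∧ S₁ ∪ S₂ = W ∧
    H = AsgProd H₁ H₂ ∧ (Y ∩ S₁).Nonempty ∧ (Y ∩ S₂).Nonempty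

/-- Combination of finitely many assignments (with pairwise disjoint domains). -/
def Asg.combine {V : Type*} {m : ℕ} (c : Fin m → Asg V) : Asg V :=
  fun x => (List.finRange m).foldr (fun i acc => (c i x).orElse (fun _ => acc)) none

/-- The product `H 0 × ⋯ × H (m-1)` of finitely many sets of assignments. -/
def bigProd {V : Type*} {m : ℕ} (H : Fin m → Set (Asg V)) : Set (Asg V) :=
  {g | ∃ c : Fin m → Asg V, (∀ i, c i ∈ H i) ∧ g = Asg.combine c}

/-- `M` is a matching of `G` (a set of pairwise disjoint edges of `G`). -/
def IsMatchingSet {V : Type*} (G : SimpleGraph V) (M : Set (Sym2 V)) : Prop :=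
  M ⊆ G.edgeSet ∧ ∀ e ∈ M, ∀ f ∈ M, e ≠ f → ∀ x, x ∈ e → x ∉ f

/-- The set `V(M)` of endpoints of a set of edges. -/
def endpoints {V : Type*} (M : Set (Sym2 V)) : Set V := {v | ∃ e ∈ M, v ∈ e}

/-- `M` is an induced matching of `G`: a matching such that the subgraph of `G`
induced by `V(M)` has edge set exactly `M`. -/
def IsInducedMatchingSet {V : Type*} (G : SimpleGraph V) (M : Set (Sym2 V)) : Prop :=
  IsMatchingSet G M ∧ ∀ e ∈ G.edgeSet, (∀ v ∈ e, v ∈ endpoints M) → e ∈ M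

/-- `P` is a prefix of the linear order `π`. -/
def IsPrefix {V : Type*} (π : LinearOrder V) (P : Set V) : Prop :=
  ∀ x ∈ P, ∀ y, π.le y x → y ∈ P

/-- `M` crosses the linear order `π`: some prefix of `π` contains exactly one
endpoint of every edge of `M`. -/
def Crosses {V : Type*} (π : LinearOrder V) (M : Set (Sym2 V)) : Prop :=
  ∃ P : Set V, IsPrefix π P ∧ ∀ e ∈ M, ∃ x y, e = s(x, y) ∧ x ∈ P ∧ y ∉ P

/-- Linear special induced matching width: the minimum over linear orders of the
maximum size of an induced matching crossing the order. -/
noncomputable def lsimw {V : Type*} (G : SimpleGraph V) : ℕ :=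
  sInf {k | ∃ π : LinearOrder V, ∀ M : Set (Sym2 V),
    IsInducedMatchingSet G M → Crosses π M → M.ncard ≤ k}

/-- Linear maximum matching width: as `lsimw` but with arbitrary matchings. -/
noncomputable def lmmw {V : Type*} (G : SimpleGraph V) : ℕ :=
  sInf {k | ∃ π : LinearOrder V, ∀ M : Set (Sym2 V),
    IsMatchingSet G M → Crosses π M → M.ncard ≤ k}

/-- The bipartite double cover `G*`; vertex `v[1]` is `(v, false)` and `v[2]` is `(v, true)`. -/
def doubleCover {V : Type*} (G : SimpleGraph V) : SimpleGraph (V × Bool) where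
  Adj a b := G.Adj a.1 b.1 ∧ a.2 ≠ b.2
  symm := ⟨fun a b h => ⟨h.1.symm, h.2.symm⟩⟩
  loopless := ⟨fun a h => h.2 rfl⟩

/-- `M`, a matching of the double cover, neatly crosses a linear order `π` of
`V × Bool`: every edge of `M` goes from `U[1]` to `W[2]` for some `U, W ⊆ V`, and
some prefix of `π` contains all endpoints of `M` on one of the two sides and none
of the endpoints on the other side. -/
def NeatlyCrosses {V : Type*} (π : LinearOrder (V × Bool)) (M : Set (Sym2 (V × Bool))) : Prop :=
  ∃ U W : Set V,
    (∀ e ∈ M, ∃ u ∈ U, ∃ w ∈ W, e = s((u, false), (w, true))) ∧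
    ∃ P : Set (V × Bool), IsPrefix π P ∧
      ((∀ v ∈ endpoints M, (v.2 = false → v ∈ P) ∧ (v.2 = true → v ∉ P)) ∨
       (∀ v ∈ endpoints M, (v.2 = true → v ∈ P) ∧ (v.2 = false → v ∉ P)))

/-- The `n × n` grid graph. -/
def gridGraph (n : ℕ) : SimpleGraph (Fin n × Fin n) :=
  SimpleGraph.fromRel (fun p q =>
    (p.1 = q.1 ∧ (p.2 : ℕ) + 1 = (q.2 : ℕ)) ∨ (p.2 = q.2 ∧ (p.1 : ℕ) + 1 = (q.1 : ℕ)))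

/-- The spanning subgraph of the `n × n` grid consisting of the horizontal edges. -/
def gridHoriz (n : ℕ) : SimpleGraph (Fin n × Fin n) :=
  SimpleGraph.fromRel (fun p q => p.1 = q.1 ∧ (p.2 : ℕ) + 1 = (q.2 : ℕ))

/-- A clause: a set of literals, a literal being a variable with a polarity
(`true` = positive). -/
abbrev Clause (W : Type*) := Set (W × Bool)

/-- A CNF: a set of clauses. -/
abbrev CNF (W : Type*) := Set (Clause W)

/-- A total assignment satisfies a CNF. -/
def Satisfies {W : Type*} (a : W → Bool) (φ : CNF W) : Prop :=
  ∀ C ∈ φ, ∃ l ∈ C, a l.1 = l.2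

/-- The set of variables occurring in a CNF. -/
def cnfVars {W : Type*} (φ : CNF W) : Set W := {x | ∃ C ∈ φ, ∃ b, (x, b) ∈ C}

/-- The CNF `φ(G)`: a positive clause `(u ∨ v)` for every edge of `G`. -/
def phiCNF {V : Type*} (G : SimpleGraph V) : CNF V :=
  {C | ∃ e ∈ G.edgeSet, C = {l | ∃ x ∈ e, l = (x, true)}}

/-- The CNF `ψ(G)`: the positive edge clauses of the double cover `G*` together with
the two all-negative clauses `⋁ᵥ ¬v[1]` and `⋁ᵥ ¬v[2]`. -/
def psiCNF {V : Type*} (G : SimpleGraph V) : CNF (V × Bool) :=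
  {C | ∃ e ∈ (doubleCover G).edgeSet, C = {l | ∃ x ∈ e, l = (x, true)}} ∪
    {{l | ∃ v : V, l = ((v, false), false)}, {l | ∃ v : V, l = ((v, true), false)}}

/-- Make a total assignment out of a partial one (defaulting to `false` off the domain). -/
def Asg.totalize {W : Type*} (g : Asg W) : W → Bool := fun x => (g x).getD false

/-- `S(φ)|_g`: assignments `h` with domain `var(φ) \ var(g)` such that `g ∪ h` satisfies `φ`. -/
def solsRestrict {W : Type*} (φ : CNF W) (g : Asg W) : Set (Asg W) :=
  {h | h.dom = cnfVars φ \ g.dom ∧ Satisfies (Asg.totalize (Asg.union g h)) φ}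

/-- A partial assignment satisfies a clause. -/
def satClausePartial {W : Type*} (g : Asg W) (C : Clause W) : Prop :=
  ∃ l ∈ C, g l.1 = some l.2

/-- The CNF `φ[g]`: delete clauses satisfied by `g` and remove from the remaining
clauses all literals whose variable is assigned by `g`. -/
def cnfRestrictFormula {W : Type*} (φ : CNF W) (g : Asg W) : CNF W :=
  {C' | ∃ C ∈ φ, ¬ satClausePartial g C ∧ C' = {l ∈ C | l.1 ∉ g.dom}}

/-- The total satisfying assignments of a CNF, over its variable set. -/
def totalSols {W : Type*} (φ : CNF W) : Set (Asg W) :=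
  {h | h.dom = cnfVars φ ∧ Satisfies (Asg.totalize h) φ}

/-- All assignments with domain `Y`. -/
def allAsgOn {W : Type*} (Y : Set W) : Set (Asg W) := {h | h.dom = Y}

/-- Binary decision trees over variables `X`. -/
inductive DTree (X : Type*) where
  | leaf : Bool → DTree X
  | node : X → DTree X → DTree X → DTree X

namespace DTree

/-- The size (number of nodes) of a decision tree. -/
def size {X : Type*} : DTree X → ℕ
  | leaf _ => 1
  | node _ t0 t1 => 1 + t0.size + t1.size

/-- The variables occurring in a decision tree. -/
def varsOf {X : Type*} : DTree X → Set X
  | leaf _ => ∅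
  | node x t0 t1 => {x} ∪ t0.varsOf ∪ t1.varsOf

/-- The read-once condition: no variable occurs twice on a root-leaf path. -/
def ReadOnce {X : Type*} : DTree X → Prop
  | leaf _ => True
  | node x t0 t1 => x ∉ t0.varsOf ∧ x ∉ t1.varsOf ∧ t0.ReadOnce ∧ t1.ReadOnce

/-- Evaluation of a decision tree on a total assignment. -/
def eval {X : Type*} : DTree X → (X → Bool) → Bool
  | leaf b, _ => b
  | node x t0 t1, a => if a x then t1.eval a else t0.eval a

end DTree

/-- `(τ, B)` is a tree decomposition of `H`. -/
def IsTreeDecomp {V : Type u} {T : Type v} (H : SimpleGraph V) (τ : SimpleGraph T)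
    (B : T → Set V) : Prop :=
  τ.IsTree ∧ (∀ e ∈ H.edgeSet, ∃ t, ∀ v ∈ e, v ∈ B t) ∧
    (∀ v : V, (τ.induce {t | v ∈ B t}).Connected)

/-- The treewidth of a graph: minimum width over all tree decompositions. -/
noncomputable def treewidth {V : Type u} (H : SimpleGraph V) : ℕ :=
  sInf {k | ∃ (T : Type) (τ : SimpleGraph T) (B : T → Set V),
    IsTreeDecomp H τ B ∧ ∀ t, (B t).ncard ≤ k + 1}

/-- `B : Fin m → Set V` is a path decomposition of `H`. -/
def IsPathDecomp {V : Type u} (H : SimpleGraph V) (m : ℕ) (B : Fin m → Set V) : Prop :=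
  (∀ e ∈ H.edgeSet, ∃ i, ∀ v ∈ e, v ∈ B i) ∧
    (∀ v : V, (∃ i, v ∈ B i) ∧
      ∀ i j k : Fin m, i ≤ j → j ≤ k → v ∈ B i → v ∈ B k → v ∈ B j)

/-- The pathwidth of a graph: minimum width over all path decompositions. -/
noncomputable def pathwidth {V : Type u} (H : SimpleGraph V) : ℕ :=
  sInf {k | ∃ (m : ℕ) (B : Fin m → Set V), IsPathDecomp H m B ∧ ∀ i, (B i).ncard ≤ k + 1}

/-- The incidence graph of a CNF: variables on one side, clauses on the other,
a variable adjacent to exactly the clauses in which it occurs. -/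
def incidenceGraph {W : Type u} (φ : CNF W) : SimpleGraph (W ⊕ {C : Clause W // C ∈ φ}) :=
  SimpleGraph.fromRel (fun a b => ∃ (x : W) (C : {C : Clause W // C ∈ φ}),
    a = Sum.inl x ∧ b = Sum.inr C ∧ ∃ bb : Bool, (x, bb) ∈ C.1)

/-! Order `V` by whichever copy of each vertex comes first in `π*`, and take an induced
matching `M₀` of `G` crossing this order, at a prefix `P₀`, with `|M₀| ≥ lsimw(G)`; write its
edges as `{x_e, y_e}` with `x_e ∈ P₀ ∌ y_e`. Sorting the edges by the part `Eᵢ` containing them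
and by the copy `x_e[b]` of `x_e` that comes first in `π*` gives a class with at least `|M₀|/4`
edges. Lifting each edge of that class to `{x_e[b], y_e[3-b]}` gives an induced matching of
`G[Eᵢ]*`, since every vertex of `G` is lifted at most once. Each `x_e[b]` precedes the first
copy of every `y_f`, because `x_e` precedes `y_f` in the order on `V`; so the prefix of `π*`
before all copies of all `y_f` contains exactly the endpoints `x_e[b]`. -/

section

variable {V : Type*}

lemma isInducedMatchingSet_empty (G : SimpleGraph V) : IsInducedMatchingSet G ∅ :=
  ⟨⟨Set.empty_subset _, by simp⟩, fun e _ he => (by simpa [endpoints] using he _ e.out_fst_mem)⟩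

lemma crosses_empty (ρ : LinearOrder V) : Crosses ρ ∅ :=
  ⟨∅, by simp [IsPrefix], by simp⟩

lemma exists_crosses_lsimw_le (G : SimpleGraph V) (ρ : LinearOrder V) :
    ∃ M, IsInducedMatchingSet G M ∧ Crosses ρ M ∧ lsimw G ≤ M.ncard := by
  by_contra! h
  have hpos : 0 < lsimw G := by
    simpa using h ∅ (isInducedMatchingSet_empty G) (crosses_empty ρ)
  have : lsimw G ≤ lsimw G - 1 :=
    Nat.sInf_le ⟨ρ, fun M hM hcross => Nat.le_sub_one_of_lt (h M hM hcross)⟩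
  omega

lemma Set.exists_ncard_le_card_mul_ncard_inter {α ι : Type*} [Fintype ι] [Nonempty ι]
    {s : Set α} {A : ι → Set α} (hs : s ⊆ ⋃ i, A i) :
    ∃ i, s.ncard ≤ Fintype.card ι * (s ∩ A i).ncard := by
  classical
  obtain ⟨i, -, hi⟩ := Finset.exists_max_image Finset.univ (fun i => (s ∩ A i).ncard)
    Finset.univ_nonempty
  refine ⟨i, ?_⟩
  calc s.ncard = (⋃ j, s ∩ A j).ncard := by rw [← Set.inter_iUnion, Set.inter_eq_left.2 hs]
    _ ≤ ∑ j, (s ∩ A j).ncard := Set.ncard_iUnion_le_of_fintype _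
    _ ≤ Fintype.card ι * (s ∩ A i).ncard := by
      rw [← Finset.card_univ, ← smul_eq_mul]
      exact Finset.sum_le_card_nsmul _ _ _ fun j _ => hi j (Finset.mem_univ j)

lemma IsInducedMatchingSet.mono {G H : SimpleGraph V} {M₀ M : Set (Sym2 V)}
    (hM₀ : IsInducedMatchingSet G M₀) (hHG : H ≤ G) (hM : M ⊆ M₀)
    (hMH : M ⊆ H.edgeSet) : IsInducedMatchingSet H M := by
  refine ⟨⟨hMH, fun e he f hf => hM₀.1.2 e (hM he) f (hM hf)⟩, fun e he hend => ?_⟩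
  obtain ⟨f, hf, hvf⟩ := hend _ e.out_fst_mem
  have heM₀ : e ∈ M₀ := hM₀.2 e (SimpleGraph.edgeSet_mono hHG he) fun v hv =>
    let ⟨g, hg, hvg⟩ := hend v hv
    ⟨g, hM hg, hvg⟩
  by_contra hne
  exact hM₀.1.2 e heM₀ f (hM hf) (fun h => hne (h ▸ hf)) _ e.out_fst_mem hvf

lemma mem_endpoints_image_map {α β : Type*} {f : α → β} {M : Set (Sym2 α)} {z : β} :
    z ∈ endpoints (Sym2.map f '' M) ↔ ∃ v ∈ endpoints M, f v = z := by
  simp only [endpoints, Set.mem_image, Set.mem_ofPred_eq]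
  constructor
  · rintro ⟨_, ⟨e, he, rfl⟩, hz⟩
    obtain ⟨v, hv, rfl⟩ := Sym2.mem_map.1 hz
    exact ⟨v, ⟨e, he, hv⟩, rfl⟩
  · rintro ⟨v, ⟨e, he, hv⟩, rfl⟩
    exact ⟨_, ⟨e, he, rfl⟩, Sym2.mem_map.2 ⟨v, hv, rfl⟩⟩

lemma IsInducedMatchingSet.image_doubleCover {H : SimpleGraph V} {M : Set (Sym2 V)}
    (hM : IsInducedMatchingSet H M) (side : V → Bool)
    (hside : ∀ x y, s(x, y) ∈ M → side x ≠ side y) :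
    IsInducedMatchingSet (doubleCover H) (Sym2.map (fun v => (v, side v)) '' M) := by
  refine ⟨⟨?_, ?_⟩, ?_⟩
  · rintro _ ⟨e, he, rfl⟩
    induction e using Sym2.ind with
    | _ x y => exact ⟨hM.1.1 he, hside x y he⟩
  · rintro _ ⟨e, he, rfl⟩ _ ⟨f, hf, rfl⟩ hne z hze hzf
    obtain ⟨v, hve, rfl⟩ := Sym2.mem_map.1 hze
    obtain ⟨w, hwf, hvw⟩ := Sym2.mem_map.1 hzf
    obtain rfl : w = v := congrArg Prod.fst hvw
    by_cases hef : e = f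
    · exact hne (hef ▸ rfl)
    · exact hM.1.2 e he f hf hef _ hve hwf
  · intro e he hend
    induction e using Sym2.ind with
    | _ p q =>
    obtain ⟨a, ha, rfl⟩ := mem_endpoints_image_map.1 (hend p (Sym2.mem_mk_left _ _))
    obtain ⟨c, hc, rfl⟩ := mem_endpoints_image_map.1 (hend q (Sym2.mem_mk_right _ _))
    have hac : s(a, c) ∈ M := hM.2 _ he.1 fun v hv => by
      rcases Sym2.mem_iff.1 hv with rfl | rfl <;> assumption
    exact ⟨s(a, c), hac, rfl⟩

lemma neatlyCrosses_of_isPrefix {H : SimpleGraph V} {π : LinearOrder (V × Bool)}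
    {M : Set (Sym2 (V × Bool))} (hM : M ⊆ (doubleCover H).edgeSet) {Q : Set (V × Bool)}
    (hQ : IsPrefix π Q) (b : Bool) (hMQ : ∀ v ∈ endpoints M, v ∈ Q ↔ v.2 = b) :
    NeatlyCrosses π M := by
  refine ⟨Set.univ, Set.univ, fun e he => ?_, Q, hQ, ?_⟩
  · induction e using Sym2.ind with
    | _ p q =>
    have hpq : p.2 ≠ q.2 := (hM he).2
    obtain ⟨p, _ | _⟩ := p <;> obtain ⟨q, _ | _⟩ := q <;> simp_all
  · cases b
    · exact .inl fun v hv => by simp [hMQ v hv]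
    · exact .inr fun v hv => by simp [hMQ v hv]

def firstCopy (π : LinearOrder (V × Bool)) (v : V) : V × Bool :=
  letI := π; min (v, false) (v, true)

lemma firstCopy_fst (π : LinearOrder (V × Bool)) (v : V) : (firstCopy π v).1 = v := by
  let _ := π
  rcases min_choice (v, false) (v, true) with h | h <;> simp [firstCopy, h]

lemma firstCopy_le (π : LinearOrder (V × Bool)) (v : V) (c : Bool) :
    π.le (firstCopy π v) (v, c) := by
  let _ := π
  cases c
  exacts [min_le_left _ _, min_le_right _ _]

lemma firstCopy_injective (π : LinearOrder (V × Bool)) : Function.Injective (firstCopy π) :=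
  fun a b h => by simpa only [firstCopy_fst] using congrArg Prod.fst h

abbrev firstCopyOrder (π : LinearOrder (V × Bool)) : LinearOrder V :=
  letI := π; LinearOrder.lift' (firstCopy π) (firstCopy_injective π)

lemma firstCopy_lt_of_isPrefix {π : LinearOrder (V × Bool)} {P : Set V}
    (hP : IsPrefix (firstCopyOrder π) P) {x y : V} (hx : x ∈ P) (hy : y ∉ P) :
    π.lt (firstCopy π x) (firstCopy π y) := by
  let _ := π
  exact lt_of_not_ge fun h => hy (hP x hx y h)

lemma exists_neatlyCrosses_lift {G : SimpleGraph V} {E : Set (Sym2 V)} (hE : E ⊆ G.edgeSet)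
    {π : LinearOrder (V × Bool)} {M₀ : Set (Sym2 V)} (hM₀ : IsInducedMatchingSet G M₀)
    {P₀ : Set V} (hP₀ : IsPrefix (firstCopyOrder π) P₀)
    (hcross : ∀ e ∈ M₀, ∃ x y, e = s(x, y) ∧ x ∈ P₀ ∧ y ∉ P₀) (b : Bool) :
    ∃ M, IsInducedMatchingSet (doubleCover (SimpleGraph.fromEdgeSet E)) M ∧
      NeatlyCrosses π M ∧
      M.ncard = (M₀ ∩ (E ∩ {e | ∀ v ∈ e, v ∈ P₀ → (firstCopy π v).2 = b})).ncard := by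
  classical
  let _ := π
  set M := M₀ ∩ (E ∩ {e | ∀ v ∈ e, v ∈ P₀ → (firstCopy π v).2 = b})
  let side : V → Bool := fun v => if v ∈ P₀ then b else !b
  have hM : IsInducedMatchingSet (SimpleGraph.fromEdgeSet E) M :=
    hM₀.mono ((SimpleGraph.fromEdgeSet_le G).2 (Set.sdiff_subset.trans hE)) Set.inter_subset_left
      fun e he => by
        rw [SimpleGraph.edgeSet_fromEdgeSet]
        exact ⟨he.2.1, G.not_isDiag_of_mem_edgeSet (hE he.2.1)⟩
  have hside : ∀ x y, s(x, y) ∈ M → side x ≠ side y := by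
    intro x y hxy
    obtain ⟨x', y', he, hx', hy'⟩ := hcross _ hxy.1
    rcases Sym2.eq_iff.1 he with ⟨rfl, rfl⟩ | ⟨rfl, rfl⟩ <;> simp [side, *]
  have hlift := hM.image_doubleCover side hside
  refine ⟨_, hlift, neatlyCrosses_of_isPrefix hlift.1.1
    (Q := {z | ∀ w ∉ P₀, ∀ c, z < (w, c)}) ?_ b ?_,
    Set.ncard_image_of_injective _ (Sym2.map.injective fun v w h => congrArg Prod.fst h)⟩
  · exact fun z hz u huz w hw c => lt_of_le_of_lt huz (hz w hw c)
  · rintro _ hz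
    obtain ⟨v, ⟨e, he, hve⟩, rfl⟩ := mem_endpoints_image_map.1 hz
    by_cases hv : v ∈ P₀
    · have hfirst : firstCopy π v = (v, b) := Prod.ext (firstCopy_fst π v) (he.2.2 v hve hv)
      simp only [side, hv, if_true, iff_true]
      exact fun w hw c =>
        hfirst ▸ (firstCopy_lt_of_isPrefix hP₀ hv hw).trans_le (firstCopy_le π w c)
    · simp only [side, hv, if_false, Bool.not_eq_self, iff_false]
      exact fun h => lt_irrefl _ (h v hv (!b))

end

theorem stmt3_general {V : Type*} (G : SimpleGraph V)
    (E₁ E₂ : Set (Sym2 V)) (hU : E₁ ∪ E₂ = G.edgeSet)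
    (π : LinearOrder (V × Bool)) :
    ∃ M : Set (Sym2 (V × Bool)),
      ((IsInducedMatchingSet (doubleCover (SimpleGraph.fromEdgeSet E₁)) M ∧
          NeatlyCrosses π M) ∨
        (IsInducedMatchingSet (doubleCover (SimpleGraph.fromEdgeSet E₂)) M ∧
          NeatlyCrosses π M)) ∧
        lsimw G ≤ 4 * M.ncard := by
  classical
  obtain ⟨M₀, hM₀, ⟨P₀, hP₀, hcross⟩, hwidth⟩ := exists_crosses_lsimw_le G (firstCopyOrder π)
  have hcover : M₀ ⊆ ⋃ ib : Bool × Bool,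
      cond ib.1 E₁ E₂ ∩ {e | ∀ v ∈ e, v ∈ P₀ → (firstCopy π v).2 = ib.2} := by
    intro e he
    obtain ⟨x, y, rfl, hx, hy⟩ := hcross e he
    have hE : s(x, y) ∈ E₁ ∪ E₂ := hU ▸ hM₀.1.1 he
    refine Set.mem_iUnion.2 ⟨(decide (s(x, y) ∈ E₁), (firstCopy π x).2), ?_, ?_⟩
    · by_cases h : s(x, y) ∈ E₁
      · simp [h]
      · simpa [h] using hE
    · rintro v hv hvP
      rcases Sym2.mem_iff.1 hv with rfl | rfl
      exacts [rfl, absurd hvP hy]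
  obtain ⟨⟨i, b⟩, hcard⟩ := Set.exists_ncard_le_card_mul_ncard_inter hcover
  have hEi : cond i E₁ E₂ ⊆ G.edgeSet := by
    cases i
    exacts [hU ▸ Set.subset_union_right, hU ▸ Set.subset_union_left]
  obtain ⟨M, hM, hneat, hMcard⟩ := exists_neatlyCrosses_lift hEi hM₀ hP₀ hcross b
  refine ⟨M, ?_, hwidth.trans (by simpa [hMcard] using hcard)⟩
  cases i
  exacts [.inr ⟨hM, hneat⟩, .inl ⟨hM, hneat⟩]

/-- if `E₁, E₂` partition `E(G)` with both spanning subgraphs having no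
isolated vertices, then every linear order `π*` of `V(G*)` is neatly crossed by an
induced matching `M` of `G[E₁]*` or of `G[E₂]*` with `4|M| ≥ lsimw(G)`. -/
theorem stmt3 {V : Type*} [Fintype V] (G : SimpleGraph V)
    (hiso : ∀ v : V, ∃ u, G.Adj v u)
    (E₁ E₂ : Set (Sym2 V)) (hU : E₁ ∪ E₂ = G.edgeSet) (hI : E₁ ∩ E₂ = ∅)
    (h1 : ∀ v : V, ∃ e ∈ E₁, v ∈ e) (h2 : ∀ v : V, ∃ e ∈ E₂, v ∈ e)
    (π : LinearOrder (V × Bool)) :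
    ∃ M : Set (Sym2 (V × Bool)),
      ((IsInducedMatchingSet (doubleCover (SimpleGraph.fromEdgeSet E₁)) M ∧
          NeatlyCrosses π M) ∨
        (IsInducedMatchingSet (doubleCover (SimpleGraph.fromEdgeSet E₂)) M ∧
          NeatlyCrosses π M)) ∧
        lsimw G ≤ 4 * M.ncard :=
  stmt3_general G E₁ E₂ hU π
end

section
/- Let G be a finite simple graph of maximum degree at most d. Then for every linear order π of V(G) and every matching M of G crossing π there is an induced matching M' ⊆ M of G crossing π with (2d+1)·|M'| ≥ |M|. Consequently, (2d+1)·lsimw(G) ≥ lmmw(G). -/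
/-! Call two distinct edges conflicting if an edge of `G` joins them; a matching is induced
exactly when it is independent in this conflict graph. In a matching of a graph of maximum
degree `d`, an edge `ab` conflicts with at most `2d` edges, since distinct conflicting edges
contain distinct neighbours of `a` or `b`. A maximal independent set `A` of the conflict graph
on `M` dominates `M`, so `|M| ≤ (2d+1)|A|`; and every sub-matching of a matching crossing `π`
crosses `π` as well, so an order optimal for `lsimw` witnesses the bound on `lmmw`. -/

theorem SimpleGraph.exists_isIndepSet_subset_ncard_le {α : Type*} (H : SimpleGraph α)
    {M : Set α} (hM : M.Finite) {k : ℕ} (hdeg : ∀ f ∈ M, (H.neighborSet f ∩ M).ncard ≤ k) :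
    ∃ A ⊆ M, H.IsIndepSet A ∧ M.ncard ≤ (k + 1) * A.ncard := by
  obtain ⟨A, -, ⟨hAM, hA⟩, hmax⟩ := (hM.finite_subsets.subset
    (fun A (hA : A ⊆ M ∧ H.IsIndepSet A) => hA.1)).exists_le_maximal
    (a := ∅) ⟨Set.empty_subset M, Set.pairwise_empty _⟩
  have hcover : M ⊆ ⋃ f ∈ A, insert f (H.neighborSet f ∩ M) := by
    intro e he
    by_cases hdom : ∃ f ∈ A, H.Adj f e
    · obtain ⟨f, hf, hfe⟩ := hdom
      exact Set.mem_biUnion hf (Set.mem_insert_of_mem _ ⟨hfe, he⟩)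
    push Not at hdom
    have hins : H.IsIndepSet (insert e A) :=
      hA.insert fun f hf _ => ⟨fun h => hdom f hf h.symm, hdom f hf⟩
    have heA : e ∈ A := hmax ⟨Set.insert_subset he hAM, hins⟩ (Set.subset_insert e A)
      (Set.mem_insert e A)
    exact Set.mem_biUnion heA (Set.mem_insert e _)
  lift A to Finset α using hM.subset hAM
  refine ⟨A, hAM, hA, ?_⟩
  calc M.ncard ≤ (⋃ f ∈ A, insert f (H.neighborSet f ∩ M)).ncard :=
        Set.ncard_le_ncard hcover (A.finite_toSet.biUnion fun _ hf =>
          hM.subset (Set.insert_subset (hAM hf) Set.inter_subset_right))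
    _ ≤ ∑ f ∈ A, (insert f (H.neighborSet f ∩ M)).ncard := A.set_ncard_biUnion_le _
    _ ≤ ∑ _f ∈ A, (k + 1) := Finset.sum_le_sum fun f hf =>
        (Set.ncard_insert_le _ _).trans (Nat.succ_le_succ (hdeg f (hAM hf)))
    _ = (k + 1) * A.card := by rw [Finset.sum_const, smul_eq_mul, mul_comm]
    _ = (k + 1) * (A : Set α).ncard := by rw [Set.ncard_coe_finset]

section

variable {V : Type*} {G : SimpleGraph V} {M M' : Set (Sym2 V)}

def conflictGraph (G : SimpleGraph V) : SimpleGraph (Sym2 V) where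
  Adj e f := e ≠ f ∧ ∃ x ∈ e, ∃ y ∈ f, G.Adj x y
  symm := ⟨fun _ _ ⟨hne, x, hx, y, hy, hxy⟩ => ⟨hne.symm, y, hy, x, hx, hxy.symm⟩⟩
  loopless := ⟨fun _ h => h.1 rfl⟩

theorem conflictGraph_adj {e f : Sym2 V} :
    (conflictGraph G).Adj e f ↔ e ≠ f ∧ ∃ x ∈ e, ∃ y ∈ f, G.Adj x y :=
  Iff.rfl

theorem IsMatchingSet.mono (hM : IsMatchingSet G M) (h : M' ⊆ M) : IsMatchingSet G M' :=
  ⟨h.trans hM.1, fun e he f hf => hM.2 e (h he) f (h hf)⟩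

theorem Crosses.mono {π : LinearOrder V} (hM : Crosses π M) (h : M' ⊆ M) : Crosses π M' :=
  let ⟨P, hP, hcross⟩ := hM
  ⟨P, hP, fun e he => hcross e (h he)⟩

theorem IsMatchingSet.isInducedMatchingSet (hM : IsMatchingSet G M)
    (hind : (conflictGraph G).IsIndepSet M) : IsInducedMatchingSet G M := by
  refine ⟨hM, fun e he hends => ?_⟩
  induction e using Sym2.ind with | h x y => ?_
  obtain ⟨f₁, hf₁, hx⟩ := hends x (Sym2.mem_mk_left x y)
  obtain ⟨f₂, hf₂, hy⟩ := hends y (Sym2.mem_mk_right x y)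
  by_cases hf : f₁ = f₂
  · subst hf
    rwa [← (Sym2.mem_and_mem_iff (G.ne_of_adj he)).mp ⟨hx, hy⟩]
  · exact absurd (conflictGraph_adj.2 ⟨hf, x, hx, y, hy, he⟩) (hind hf₁ hf₂ hf)

theorem IsMatchingSet.ncard_conflict_le [Finite V] {d : ℕ}
    (hdeg : ∀ v : V, (G.neighborSet v).ncard ≤ d) (hM : IsMatchingSet G M) (f : Sym2 V) :
    ((conflictGraph G).neighborSet f ∩ M).ncard ≤ 2 * d := by
  induction f using Sym2.ind with | h a b => ?_
  set T := G.neighborSet a ∪ G.neighborSet b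
  have hmeet : ∀ e ∈ (conflictGraph G).neighborSet s(a, b) ∩ M, ∃ y ∈ e, y ∈ T := by
    rintro e ⟨he, -⟩
    obtain ⟨-, x, hx, y, hy, hxy⟩ := conflictGraph_adj.1 he
    rcases Sym2.mem_iff.mp hx with rfl | rfl
    exacts [⟨y, hy, Or.inl hxy⟩, ⟨y, hy, Or.inr hxy⟩]
  have : Nonempty V := ⟨a⟩
  choose! pick hpick hpickT using hmeet
  calc _ ≤ T.ncard := Set.ncard_le_ncard_of_injOn pick hpickT fun e₁ he₁ e₂ he₂ heq => by
        by_contra hne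
        exact hM.2 e₁ he₁.2 e₂ he₂.2 hne _ (hpick e₁ he₁) (heq ▸ hpick e₂ he₂)
    _ ≤ d + d := (Set.ncard_union_le _ _).trans (add_le_add (hdeg a) (hdeg b))
    _ = 2 * d := (two_mul d).symm

theorem IsMatchingSet.exists_isInducedMatchingSet_subset [Finite V] {d : ℕ}
    (hdeg : ∀ v : V, (G.neighborSet v).ncard ≤ d) (hM : IsMatchingSet G M) :
    ∃ M' ⊆ M, IsInducedMatchingSet G M' ∧ M.ncard ≤ (2 * d + 1) * M'.ncard := by
  obtain ⟨A, hAM, hA, hcard⟩ := (conflictGraph G).exists_isIndepSet_subset_ncard_le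
    M.toFinite fun f _ => hM.ncard_conflict_le hdeg f
  exact ⟨A, hAM, (hM.mono hAM).isInducedMatchingSet hA, hcard⟩

theorem lmmw_le_mul_lsimw {c : ℕ}
    (h : ∀ (π : LinearOrder V) (M : Set (Sym2 V)), IsMatchingSet G M → Crosses π M →
      ∃ M' ⊆ M, IsInducedMatchingSet G M' ∧ Crosses π M' ∧ M.ncard ≤ c * M'.ncard) :
    lmmw G ≤ c * lsimw G := by
  rcases Set.eq_empty_or_nonempty {k | ∃ π : LinearOrder V, ∀ M : Set (Sym2 V),
      IsInducedMatchingSet G M → Crosses π M → M.ncard ≤ k} with hI | hI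
  -- no order bounds the induced matchings, so both widths are the junk value `sInf ∅ = 0`
  · have hM : {k | ∃ π : LinearOrder V, ∀ M : Set (Sym2 V),
        IsMatchingSet G M → Crosses π M → M.ncard ≤ k} = ∅ :=
      Set.eq_empty_of_subset_empty <| hI ▸ fun k ⟨π, hπ⟩ => ⟨π, fun M hM => hπ M hM.1⟩
    simp [lmmw, lsimw, hI, hM]
  · obtain ⟨π, hπ⟩ := Nat.sInf_mem hI
    refine Nat.sInf_le ⟨π, fun M hM hC => ?_⟩
    obtain ⟨M', -, hM', hC', hcard⟩ := h π M hM hC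
    exact hcard.trans (Nat.mul_le_mul_left c (hπ M' hM' hC'))

end

/-- in a graph of maximum degree at most `d`, every matching crossing a
linear order `π` contains an induced matching crossing `π` that is smaller by a factor
of at most `2d+1`; consequently `(2d+1)·lsimw(G) ≥ lmmw(G)`. -/
theorem stmt10 {V : Type*} [Fintype V] (G : SimpleGraph V) (d : ℕ)
    (hdeg : ∀ v : V, (G.neighborSet v).ncard ≤ d) :
    (∀ (π : LinearOrder V) (M : Set (Sym2 V)), IsMatchingSet G M → Crosses π M →
        ∃ M' ⊆ M, IsInducedMatchingSet G M' ∧ Crosses π M' ∧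
          M.ncard ≤ (2 * d + 1) * M'.ncard) ∧
      lmmw G ≤ (2 * d + 1) * lsimw G := by
  have hsub : ∀ (π : LinearOrder V) (M : Set (Sym2 V)), IsMatchingSet G M → Crosses π M →
      ∃ M' ⊆ M, IsInducedMatchingSet G M' ∧ Crosses π M' ∧
        M.ncard ≤ (2 * d + 1) * M'.ncard := fun π M hM hC =>
    let ⟨M', hM'M, hind, hcard⟩ := hM.exists_isInducedMatchingSet_subset hdeg
    ⟨M', hM'M, hind, hC.mono hM'M, hcard⟩
  exact ⟨hsub, lmmw_le_mul_lsimw hsub⟩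
end
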